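/- arXiv:math/0405090 — 3 statements merged into one kernel-verified Lean document; each statement's English description precedes it below -/
import Mathlib

section
/- Under the heavy-tailed Wigner setup, with probability tending to $1$ as $n \to \infty$, there is no pair $(i,j)$ with $1 \le i < j \le n$ such that $|a_{ij}| > b_n^{99/100}$ and $|a_{ii}| + |a_{jj}| > b_n^{1/10}$. -/
/-
A union bound over the pairs `i < j`, together with the independence of `a_ij` from `a_ii` and
`a_jj`, bounds the probability by `2 n² G(bₙ^{99/100}) G(bₙ^{1/10} / 2)`, where `G(x) = h(x) x^{-α}`
is the common tail. As `n² G(bₙ) → 2`, it remains to see that this product is `o(G(bₙ))`. The tail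
`G` is monotone and `G(2x) / G(x) → 2^{-α}`, so Potter's bounds give
`G(bₙ^{99/100}) ≲ bₙ^{(α+ε)/100} G(bₙ)` and `G(bₙ^{1/10} / 2) ≲ bₙ^{-(α-ε)/10}`,
and for small `ε` the second factor wins.
-/

open MeasureTheory ProbabilityTheory Filter
open Set
open scoped ENNReal

lemma le_two_pow_mul_of_le {x₀ y : ℝ} (hy : x₀ ≤ y) (hy0 : 0 ≤ y) (m : ℕ) : x₀ ≤ 2 ^ m * y :=
  hy.trans (le_mul_of_one_le_left hy0 (one_le_pow₀ one_le_two))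

lemma AntitoneOn.le_rpow_mul_of_two_mul_ge {G : ℝ → ℝ} {x₀ γ x y : ℝ}
    (hG : AntitoneOn G (Ici x₀)) (hx₀ : 0 < x₀) (hγ : 0 ≤ γ) (hGx : 0 ≤ G x)
    (hdbl : ∀ x ≥ x₀, 2 ^ (-γ) * G x ≤ G (2 * x)) (hy : x₀ ≤ y) (hyx : y ≤ x) :
    G y ≤ (2 * x / y) ^ γ * G x := by
  have hy0 : 0 < y := hx₀.trans_le hy
  obtain ⟨k, hk, hk'⟩ := exists_nat_pow_near ((one_le_div hy0).2 hyx) one_lt_two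
  have hchain : ((2 : ℝ) ^ (-γ)) ^ (k + 1) * G y ≤ G (2 ^ (k + 1) * y) := by
    simpa only [pow_zero, one_mul] using geom_le (u := fun m => G (2 ^ m * y)) (c := 2 ^ (-γ))
      (by positivity) (k + 1) fun m _ => by
        simpa only [pow_succ, mul_comm, mul_left_comm] using
          hdbl _ (le_two_pow_mul_of_le hy hy0.le m)
  rw [Real.rpow_pow_comm zero_le_two, Real.rpow_neg (by positivity),
    inv_mul_le_iff₀ (by positivity)] at hchain
  calc G y ≤ ((2 : ℝ) ^ (k + 1)) ^ γ * G (2 ^ (k + 1) * y) := hchain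
    _ ≤ ((2 : ℝ) ^ (k + 1)) ^ γ * G x := by
      gcongr
      exact hG (hy.trans hyx) (le_two_pow_mul_of_le hy hy0.le _) ((div_lt_iff₀ hy0).1 hk').le
    _ ≤ (2 * x / y) ^ γ * G x := by
      gcongr
      rw [pow_succ, mul_comm, mul_div_assoc]
      gcongr

lemma AntitoneOn.le_rpow_mul_of_two_mul_le {G : ℝ → ℝ} {x₀ β x y : ℝ}
    (hG : AntitoneOn G (Ici x₀)) (hx₀ : 0 < x₀) (hβ : 0 ≤ β) (hGy : 0 ≤ G y)
    (hdbl : ∀ x ≥ x₀, G (2 * x) ≤ 2 ^ (-β) * G x) (hy : x₀ ≤ y) (hyx : y ≤ x) :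
    G x ≤ (x / (2 * y)) ^ (-β) * G y := by
  have hy0 : 0 < y := hx₀.trans_le hy
  obtain ⟨k, hk, hk'⟩ := exists_nat_pow_near ((one_le_div hy0).2 hyx) one_lt_two
  have hchain : G (2 ^ k * y) ≤ ((2 : ℝ) ^ (-β)) ^ k * G y := by
    simpa only [pow_zero, one_mul] using le_geom (u := fun m => G (2 ^ m * y)) (c := 2 ^ (-β))
      (by positivity) k fun m _ => by
        simpa only [pow_succ, mul_comm, mul_left_comm] using
          hdbl _ (le_two_pow_mul_of_le hy hy0.le m)
  rw [Real.rpow_pow_comm zero_le_two] at hchain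
  calc G x ≤ G (2 ^ k * y) :=
        hG (le_two_pow_mul_of_le hy hy0.le k) (hy.trans hyx) ((le_div_iff₀ hy0).1 hk)
    _ ≤ ((2 : ℝ) ^ k) ^ (-β) * G y := hchain
    _ ≤ (x / (2 * y)) ^ (-β) * G y := by
      refine mul_le_mul_of_nonneg_right (Real.rpow_le_rpow_of_nonpos
        (div_pos (hy0.trans_le hyx) (by positivity)) ?_
        (neg_nonpos.2 hβ)) hGy
      rw [div_le_iff₀ (by positivity), ← mul_assoc, ← pow_succ]
      exact ((div_lt_iff₀ hy0).1 hk').le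

lemma exists_forall_ge_doubling_bounds {G : ℝ → ℝ} {α β γ : ℝ} (hpos : ∀ x > 0, 0 < G x)
    (hratio : Tendsto (fun x => G (2 * x) / G x) atTop (nhds (2 ^ (-α)))) (hβ : β < α)
    (hγ : α < γ) :
    ∃ x₀ > 0, ∀ x ≥ x₀, 2 ^ (-γ) * G x ≤ G (2 * x) ∧ G (2 * x) ≤ 2 ^ (-β) * G x := by
  have hev : ∀ᶠ x in atTop, 0 < x ∧ 2 ^ (-γ) * G x ≤ G (2 * x) ∧ G (2 * x) ≤ 2 ^ (-β) * G x := by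
    filter_upwards [eventually_gt_atTop 0,
      hratio.eventually_const_lt (Real.rpow_lt_rpow_of_exponent_lt one_lt_two (neg_lt_neg hγ)),
      hratio.eventually_lt_const (Real.rpow_lt_rpow_of_exponent_lt one_lt_two (neg_lt_neg hβ))]
      with x hx hlo hhi
    exact ⟨hx, (le_div_iff₀ (hpos x hx)).1 hlo.le, (div_le_iff₀ (hpos x hx)).1 hhi.le⟩
  obtain ⟨x₀, hx₀⟩ := eventually_atTop.1 hev
  exact ⟨x₀, (hx₀ x₀ le_rfl).1, fun x hx => (hx₀ x hx).2⟩

lemma AntitoneOn.tendsto_atTop_of_tendsto_comp_nhds_zero {ι : Type*} {l : Filter ι}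
    {G : ℝ → ℝ} {b : ι → ℝ} (hG : AntitoneOn G (Ioi 0)) (hpos : ∀ x > 0, 0 < G x)
    (hb : ∀ i, 0 < b i) (h : Tendsto (fun i => G (b i)) l (nhds 0)) : Tendsto b l atTop := by
  refine tendsto_atTop.2 fun C => ?_
  have hC : (0 : ℝ) < max C 1 := lt_max_of_lt_right one_pos
  filter_upwards [h.eventually_lt_const (hpos _ hC)] with i hi
  by_contra! hbi
  exact hi.not_ge (hG (hb i) hC (hbi.le.trans (le_max_left _ _)))

lemma AntitoneOn.apply_rpow_mul_apply_rpow_div_two_le {G : ℝ → ℝ} {x₀ β γ θ η B : ℝ}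
    (hG : AntitoneOn G (Ici x₀)) (hG0 : ∀ x ≥ x₀, 0 ≤ G x) (hx₀ : 0 < x₀) (hβ : 0 ≤ β)
    (hγ : 0 ≤ γ) (hlo : ∀ x ≥ x₀, 2 ^ (-γ) * G x ≤ G (2 * x))
    (hhi : ∀ x ≥ x₀, G (2 * x) ≤ 2 ^ (-β) * G x) (hθ : x₀ ≤ B ^ θ) (hθB : B ^ θ ≤ B)
    (hη : x₀ ≤ B ^ η / 2) :
    G (B ^ θ) * G (B ^ η / 2) ≤
      2 ^ γ * (4 * x₀) ^ β * G x₀ * B ^ ((1 - θ) * γ - η * β) * G B := by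
  have hB : 0 < B := hx₀.trans_le (hθ.trans hθB)
  have hup := hG.le_rpow_mul_of_two_mul_ge hx₀ hγ (hG0 B (hθ.trans hθB)) hlo hθ hθB
  have hdown := hG.le_rpow_mul_of_two_mul_le hx₀ hβ (hG0 x₀ le_rfl) hhi le_rfl hη
  have e1 : (2 * B / B ^ θ) ^ γ = 2 ^ γ * B ^ ((1 - θ) * γ) := by
    rw [Real.rpow_mul hB.le, Real.rpow_sub hB, Real.rpow_one, mul_div_assoc,
      Real.mul_rpow zero_le_two (by positivity)]
  have e2 : (B ^ η / 2 / (2 * x₀)) ^ (-β) = (4 * x₀) ^ β * B ^ (-(η * β)) := by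
    rw [div_div, ← mul_assoc, Real.div_rpow (by positivity) (by positivity), ← Real.rpow_mul hB.le,
      mul_neg, Real.rpow_neg (by positivity) β, div_inv_eq_mul, mul_comm]
    norm_num
  calc G (B ^ θ) * G (B ^ η / 2)
      ≤ ((2 * B / B ^ θ) ^ γ * G B) * ((B ^ η / 2 / (2 * x₀)) ^ (-β) * G x₀) :=
        mul_le_mul hup hdown (hG0 _ hη) (by have := hG0 B (hθ.trans hθB); positivity)
    _ = _ := by
      rw [e1, e2, Real.rpow_sub hB, Real.rpow_neg hB.le]
      ring

lemma exists_pos_le_and_mul_add_lt_mul_sub {α θ η : ℝ} (hα : 0 < α) (hθ1 : θ ≤ 1)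
    (hθη : 1 < θ + η) : ∃ ε, 0 < ε ∧ ε ≤ α ∧ (1 - θ) * (α + ε) < η * (α - ε) := by
  have hs : 0 < 1 - θ + η := by linarith
  -- half of the supremum `(θ + η - 1) α / (1 - θ + η)` of the admissible `ε`
  refine ⟨(θ + η - 1) * α / (2 * (1 - θ + η)), by positivity, ?_, ?_⟩
  · rw [div_le_iff₀ (by positivity)]
    nlinarith
  · have key : (1 - θ + η) * ((θ + η - 1) * α / (2 * (1 - θ + η))) = (θ + η - 1) * α / 2 := by
      field_simp
    nlinarith

theorem tendsto_sq_mul_apply_rpow_mul_apply_rpow_div_two {G : ℝ → ℝ} {α θ η L : ℝ}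
    {b : ℕ → ℝ} (hG : AntitoneOn G (Ioi 0)) (hpos : ∀ x > 0, 0 < G x)
    (hratio : Tendsto (fun x => G (2 * x) / G x) atTop (nhds (2 ^ (-α)))) (hα : 0 < α)
    (hθ : 0 < θ) (hθ1 : θ ≤ 1) (hθη : 1 < θ + η) (hb : ∀ n, 0 < b n)
    (hGb : Tendsto (fun n : ℕ => (n : ℝ) ^ 2 * G (b n)) atTop (nhds L)) :
    Tendsto (fun n : ℕ => (n : ℝ) ^ 2 * (G (b n ^ θ) * G (b n ^ η / 2))) atTop (nhds 0) := by
  obtain ⟨ε, hε, hεα, hexp⟩ := exists_pos_le_and_mul_add_lt_mul_sub hα hθ1 hθη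
  obtain ⟨x₀, hx₀, hdbl⟩ := exists_forall_ge_doubling_bounds hpos hratio
    (by linarith : α - ε < α) (by linarith : α < α + ε)
  have hbtop : Tendsto b atTop atTop := by
    refine hG.tendsto_atTop_of_tendsto_comp_nhds_zero hpos hb ?_
    have hinv : Tendsto (fun n : ℕ => ((n : ℝ) ^ 2)⁻¹) atTop (nhds 0) :=
      tendsto_inv_atTop_zero.comp ((tendsto_pow_atTop two_ne_zero).comp tendsto_natCast_atTop_atTop)
    simpa using (hGb.mul hinv).congr' <| (eventually_ne_atTop 0).mono fun n hn => by
      field_simp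
  set C := 2 ^ (α + ε) * (4 * x₀) ^ (α - ε) * G x₀
  set κ := (1 - θ) * (α + ε) - η * (α - ε)
  have hlim : Tendsto (fun n : ℕ => (n : ℝ) ^ 2 * G (b n) * (C * b n ^ κ)) atTop (nhds 0) := by
    have hκ : Tendsto (fun n => b n ^ κ) atTop (nhds 0) := by
      simpa only [neg_neg, Function.comp_def] using
        (tendsto_rpow_neg_atTop (by linarith : 0 < -κ)).comp hbtop
    simpa using hGb.mul (hκ.const_mul C)
  refine squeeze_zero' (Eventually.of_forall fun n => ?_) ?_ hlim
  · have := hpos _ (Real.rpow_pos_of_pos (hb n) θ)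
    have := hpos (b n ^ η / 2) (by have := Real.rpow_pos_of_pos (hb n) η; positivity)
    positivity
  filter_upwards [hbtop.eventually_ge_atTop 1,
    ((tendsto_rpow_atTop hθ).comp hbtop).eventually_ge_atTop x₀,
    (((tendsto_rpow_atTop (by linarith : 0 < η)).comp hbtop).atTop_div_const
      two_pos).eventually_ge_atTop x₀]
    with n hbn hθn hηn
  have hmain := AntitoneOn.apply_rpow_mul_apply_rpow_div_two_le
    (hG.mono fun x hx => hx₀.trans_le hx) (fun x hx => (hpos x (hx₀.trans_le hx)).le) hx₀
    (by linarith) (by linarith) (fun x hx => (hdbl x hx).1) (fun x hx => (hdbl x hx).2)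
    hθn (Real.rpow_le_self_of_one_le hbn hθ1) hηn
  calc (n : ℝ) ^ 2 * (G (b n ^ θ) * G (b n ^ η / 2)) ≤ (n : ℝ) ^ 2 * (C * b n ^ κ * G (b n)) :=
        mul_le_mul_of_nonneg_left hmain (by positivity)
    _ = (n : ℝ) ^ 2 * G (b n) * (C * b n ^ κ) := by ring

lemma measure_lt_abs_and_lt_abs_add_abs_le {Ω : Type*} [MeasurableSpace Ω] {μ : Measure Ω}
    {X Y Z : Ω → ℝ} (hXY : IndepFun X Y μ) (hXZ : IndepFun X Z μ) (c d : ℝ) :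
    μ {ω | c < |X ω| ∧ d < |Y ω| + |Z ω|} ≤
      μ {ω | c < |X ω|} * μ {ω | d / 2 < |Y ω|} + μ {ω | c < |X ω|} * μ {ω | d / 2 < |Z ω|} := by
  have hmeas : ∀ r : ℝ, MeasurableSet {x : ℝ | r < |x|} := fun r =>
    measurableSet_lt measurable_const measurable_abs
  calc μ {ω | c < |X ω| ∧ d < |Y ω| + |Z ω|}
      ≤ μ (X ⁻¹' {x | c < |x|} ∩ Y ⁻¹' {x | d / 2 < |x|} ∪
          X ⁻¹' {x | c < |x|} ∩ Z ⁻¹' {x | d / 2 < |x|}) := by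
        refine measure_mono fun ω ⟨hX, hYZ⟩ => ?_
        by_cases hY : d / 2 < |Y ω|
        · exact Or.inl ⟨hX, hY⟩
        · exact Or.inr ⟨hX, show d / 2 < |Z ω| by linarith⟩
    _ ≤ μ (X ⁻¹' {x | c < |x|} ∩ Y ⁻¹' {x | d / 2 < |x|}) +
          μ (X ⁻¹' {x | c < |x|} ∩ Z ⁻¹' {x | d / 2 < |x|}) := measure_union_le _ _
    _ = _ := by
      rw [hXY.measure_inter_preimage_eq_mul _ _ (hmeas c) (hmeas _),
        hXZ.measure_inter_preimage_eq_mul _ _ (hmeas c) (hmeas _)]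
      rfl

lemma measure_exists_lt_abs_offDiag_and_lt_abs_diag_add_le {Ω : Type*} [MeasurableSpace Ω]
    {μ : Measure Ω} {n : ℕ} {a : Fin n → Fin n → Ω → ℝ}
    (hindep : iIndepFun (fun q : {q : Fin n × Fin n // q.1 ≤ q.2} => a q.1.1 q.1.2) μ)
    {c d p q : ℝ} (hp0 : 0 ≤ p) (hp : ∀ i j, i < j → μ {ω | c < |a i j ω|} ≤ ENNReal.ofReal p)
    (hq : ∀ i, μ {ω | d / 2 < |a i i ω|} ≤ ENNReal.ofReal q) :
    μ {ω | ∃ i j, i < j ∧ c < |a i j ω| ∧ d < |a i i ω| + |a j j ω|} ≤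
      ENNReal.ofReal (2 * (n ^ 2 * (p * q))) := by
  have hpair : ∀ i j, μ {ω | i < j ∧ c < |a i j ω| ∧ d < |a i i ω| + |a j j ω|} ≤
      2 * ENNReal.ofReal (p * q) := by
    intro i j
    by_cases hij : i < j
    · have hindep_diag : ∀ k, IndepFun (a i j) (a k k) μ := fun k =>
        hindep.indepFun (i := ⟨(i, j), hij.le⟩) (j := ⟨(k, k), le_rfl⟩) fun h => by
          simp only [Subtype.mk.injEq, Prod.mk.injEq] at h
          exact hij.ne (h.1.trans h.2.symm)
      calc _ ≤ μ {ω | c < |a i j ω| ∧ d < |a i i ω| + |a j j ω|} :=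
            measure_mono fun ω hω => hω.2
        _ ≤ _ := measure_lt_abs_and_lt_abs_add_abs_le (hindep_diag i) (hindep_diag j) c d
        _ ≤ ENNReal.ofReal p * ENNReal.ofReal q + ENNReal.ofReal p * ENNReal.ofReal q :=
            add_le_add (mul_le_mul' (hp i j hij) (hq i)) (mul_le_mul' (hp i j hij) (hq j))
        _ = 2 * ENNReal.ofReal (p * q) := by rw [← two_mul, ENNReal.ofReal_mul hp0]
    · simp [hij]
  calc _ = μ (⋃ i, ⋃ j, {ω | i < j ∧ c < |a i j ω| ∧ d < |a i i ω| + |a j j ω|}) := by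
        congr 1; ext; simp
    _ ≤ ∑ i, ∑ j, μ {ω | i < j ∧ c < |a i j ω| ∧ d < |a i i ω| + |a j j ω|} :=
        (measure_iUnion_fintype_le _ _).trans
          (Finset.sum_le_sum fun i _ => measure_iUnion_fintype_le _ _)
    _ ≤ ∑ _i : Fin n, ∑ _j : Fin n, 2 * ENNReal.ofReal (p * q) := by
        gcongr with i _ j _; exact hpair i j
    _ = ENNReal.ofReal (2 * (n ^ 2 * (p * q))) := by
        rw [ENNReal.ofReal_mul zero_le_two, ENNReal.ofReal_mul (sq_nonneg (n : ℝ)),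
          ENNReal.ofReal_pow n.cast_nonneg, ENNReal.ofReal_natCast, ENNReal.ofReal_ofNat]
        simp [sq, mul_assoc, mul_left_comm]

theorem stmt_11_general {Ω : Type*} [MeasurableSpace Ω] (μ : Measure Ω)
    (a : (n : ℕ) → Fin n → Fin n → Ω → ℝ)
    (hindep : ∀ n, iIndepFun
      (fun q : {q : Fin n × Fin n // q.1 ≤ q.2} => a n q.1.1 q.1.2) μ)
    (α : ℝ) (hα : 0 < α)
    (h : ℝ → ℝ) (hpos : ∀ x > 0, 0 < h x)
    (hslow : ∀ t > 0, Tendsto (fun x : ℝ => h (t * x) / h x) atTop (nhds 1))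
    (htail : ∀ n (i j : Fin n), i ≤ j → ∀ x : ℝ, 0 < x →
      μ {ω | x < |a n i j ω|} = ENNReal.ofReal (h x / x ^ α))
    (b : ℕ → ℝ) (hb : ∀ n, 0 < b n)
    (hbn : ∀ x > 0, Tendsto
      (fun n : ℕ => ((n : ℝ) ^ 2 / 2) * (h (b n * x) / (b n * x) ^ α))
      atTop (nhds (x ^ (-α)))) :
    Tendsto (fun n : ℕ =>
        μ {ω | ∃ i j : Fin n, i < j ∧ b n ^ ((99 : ℝ) / 100) < |a n i j ω| ∧
          b n ^ ((1 : ℝ) / 10) < |a n i i ω| + |a n j j ω|})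
      atTop (nhds 0) := by
  set G : ℝ → ℝ := fun x => h x / x ^ α
  have hGpos : ∀ x > 0, 0 < G x := fun x hx => div_pos (hpos x hx) (Real.rpow_pos_of_pos hx α)
  have hG : AntitoneOn G (Ioi 0) := fun x hx y hy hxy => by
    rw [← ENNReal.ofReal_le_ofReal_iff (hGpos x hx).le, ← htail 1 0 0 le_rfl x hx,
      ← htail 1 0 0 le_rfl y hy]
    exact measure_mono fun ω hω => hxy.trans_lt hω
  have hratio : Tendsto (fun x => G (2 * x) / G x) atTop (nhds (2 ^ (-α))) := by
    refine (one_mul ((2 : ℝ) ^ (-α)) ▸ (hslow 2 two_pos).mul_const _).congr' ?_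
    filter_upwards [eventually_gt_atTop 0] with x hx
    have := (hpos x hx).ne'
    simp only [G, Real.mul_rpow zero_le_two hx.le, Real.rpow_neg zero_le_two]
    field_simp
  have hGb : Tendsto (fun n : ℕ => (n : ℝ) ^ 2 * G (b n)) atTop (nhds 2) := by
    have := (hbn 1 one_pos).const_mul 2
    simp only [mul_one, Real.one_rpow] at this
    exact this.congr fun n => by ring
  have hprod := tendsto_sq_mul_apply_rpow_mul_apply_rpow_div_two hG hGpos hratio hα
    (θ := 99 / 100) (η := 1 / 10) (by norm_num) (by norm_num) (by norm_num) hb hGb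
  have hlim := ENNReal.tendsto_ofReal (hprod.const_mul 2)
  rw [mul_zero, ENNReal.ofReal_zero] at hlim
  exact tendsto_of_tendsto_of_tendsto_of_le_of_le tendsto_const_nhds hlim (fun _ => zero_le)
    fun n => measure_exists_lt_abs_offDiag_and_lt_abs_diag_add_le (hindep n)
      (hGpos _ (Real.rpow_pos_of_pos (hb n) _)).le
      (fun i j hij => (htail n i j hij.le _ (Real.rpow_pos_of_pos (hb n) _)).le)
      (fun i => (htail n i i le_rfl _ (half_pos (Real.rpow_pos_of_pos (hb n) _))).le)

/-- with probability tending to 1 there is no pair `i < j` with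
`|a_{ij}| > bₙ^{99/100}` and `|a_{ii}| + |a_{jj}| > bₙ^{1/10}`. -/
theorem stmt_11 {Ω : Type*} [MeasurableSpace Ω] (μ : Measure Ω) [IsProbabilityMeasure μ]
    (a : (n : ℕ) → Fin n → Fin n → Ω → ℝ)
    (hmeas : ∀ n i j, Measurable (a n i j))
    (hsymm : ∀ n (i j : Fin n) ω, a n i j ω = a n j i ω)
    (hindep : ∀ n, iIndepFun
      (fun q : {q : Fin n × Fin n // q.1 ≤ q.2} => a n q.1.1 q.1.2) μ)
    (α : ℝ) (hα : 0 < α) (hα2 : α < 2)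
    (h : ℝ → ℝ) (hpos : ∀ x > 0, 0 < h x)
    (hslow : ∀ t > 0, Tendsto (fun x : ℝ => h (t * x) / h x) atTop (nhds 1))
    (htail : ∀ n (i j : Fin n), i ≤ j → ∀ x : ℝ, 0 < x →
      μ {ω | x < |a n i j ω|} = ENNReal.ofReal (h x / x ^ α))
    (b : ℕ → ℝ) (hb : ∀ n, 0 < b n)
    (hbn : ∀ x > 0, Tendsto
      (fun n : ℕ => ((n : ℝ) ^ 2 / 2) * (h (b n * x) / (b n * x) ^ α))
      atTop (nhds (x ^ (-α)))) :
    Tendsto (fun n : ℕ =>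
        μ {ω | ∃ i j : Fin n, i < j ∧ b n ^ ((99 : ℝ) / 100) < |a n i j ω| ∧
          b n ^ ((1 : ℝ) / 10) < |a n i i ω| + |a n j j ω|})
      atTop (nhds 0) :=
  stmt_11_general μ a hindep α hα h hpos hslow htail b hb hbn
end

section
/- Under the heavy-tailed Wigner setup, for any $\delta > 0$, with probability tending to $1$ as $n \to \infty$ there is no row $i$, $1 \le i \le n$, containing at least two entries $a_{ij}$ with $|a_{ij}| > b_n^{3/4 + \delta}$. -/
/-!
By a union bound over a row `i` and two columns `j ≠ j'`, and independence of distinct entries,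
the probability is at most `n³ G(bₙ^β)²` with `β = 3/4 + δ`. Comparing the normalization
`n² G(bₙ x) → 2 x^{-α}` along `n` and `2n` shows `log bₙ / log n → 2/α`, so for
`3/4 < β' < β` eventually `b_m ≤ bₙ^β` with `m = ⌈n^β'⌉`. Monotonicity of the tail then gives
`G(bₙ^β) ≤ G(b_m) = O(m⁻²) = O(n^{-2β'})`, and `n³ G(bₙ^β)² = O(n^{3-4β'}) → 0`.
-/

open MeasureTheory ProbabilityTheory Filter Real Set Topology
open scoped ENNReal

lemma exists_two_pow_mul_le_lt {N n : ℕ} (hN : 0 < N) (hn : N ≤ n) :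
    ∃ k, 2 ^ k * N ≤ n ∧ n < 2 ^ (k + 1) * N := by
  have hq : n / N ≠ 0 := (Nat.div_pos hn hN).ne'
  refine ⟨Nat.log 2 (n / N), ?_, ?_⟩
  · exact (Nat.le_div_iff_mul_le hN).1 (Nat.pow_log_le_self 2 hq)
  · exact (Nat.div_lt_iff_lt_mul hN).1 (Nat.lt_pow_succ_log_self one_lt_two _)

section Doubling

variable {u : ℕ → ℝ} {c e : ℝ} {N : ℕ}

lemma le_add_mul_of_doubling (hdouble : ∀ n, N ≤ n → u (2 * n) ≤ u n + e) (k : ℕ) :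
    u (2 ^ k * N) ≤ u N + k * e := by
  induction k with
  | zero => simp
  | succ k ih =>
    have := hdouble _ (Nat.le_mul_of_pos_left N (Nat.two_pow_pos k))
    rw [← mul_assoc, ← pow_succ'] at this
    push_cast
    linarith

lemma add_mul_le_of_doubling (hdouble : ∀ n, N ≤ n → u n + e ≤ u (2 * n)) (k : ℕ) :
    u N + k * e ≤ u (2 ^ k * N) := by
  have := le_add_mul_of_doubling (u := fun n => -u n) (e := -e) (N := N)
    (fun n hn => by linarith [hdouble n hn]) k
  linarith

lemma exists_le_add_mul_log_of_doubling (hN : 0 < N) (he : 0 ≤ e)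
    (hmono : ∀ n m, N ≤ n → n ≤ m → u n ≤ u m + c)
    (hdouble : ∀ n, N ≤ n → u (2 * n) ≤ u n + e * log 2) :
    ∃ C, ∀ n, N ≤ n → u n ≤ C + e * log n := by
  refine ⟨u N + c + e * log 2 - e * log N, fun n hn => ?_⟩
  obtain ⟨k, hkn, hnk⟩ := exists_two_pow_mul_le_lt hN hn
  have hlog : k * log 2 ≤ log n - log N := by
    have : ((2 ^ k * N : ℕ) : ℝ) ≤ n := by exact_mod_cast hkn
    push_cast at this
    rw [← log_pow, le_sub_iff_add_le, ← log_mul (by positivity) (by positivity)]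
    exact log_le_log (by positivity) this
  have := le_add_mul_of_doubling hdouble (k + 1)
  have := hmono n _ hn hnk.le
  push_cast at *
  nlinarith

lemma exists_add_mul_log_le_of_doubling (hN : 0 < N) (he : 0 ≤ e)
    (hmono : ∀ n m, N ≤ n → n ≤ m → u n ≤ u m + c)
    (hdouble : ∀ n, N ≤ n → u n + e * log 2 ≤ u (2 * n)) :
    ∃ C, ∀ n, N ≤ n → C + e * log n ≤ u n := by
  refine ⟨u N - c - e * log 2 - e * log N, fun n hn => ?_⟩
  obtain ⟨k, hkn, hnk⟩ := exists_two_pow_mul_le_lt hN hn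
  have hlog : log n - log N ≤ (k + 1) * log 2 := by
    have : (n : ℝ) ≤ ((2 ^ (k + 1) * N : ℕ) : ℝ) := by exact_mod_cast hnk.le
    push_cast at this
    rw [← Nat.cast_succ, ← log_pow, sub_le_iff_le_add, ← log_mul (by positivity) (by positivity)]
    exact log_le_log (by exact_mod_cast hN.trans_le hn) this
  have := add_mul_le_of_doubling hdouble k
  have := hmono _ n (Nat.le_mul_of_pos_left N (Nat.two_pow_pos k)) hkn
  nlinarith

end Doubling

lemma tendsto_log_natCast_atTop : Tendsto (fun n : ℕ => log n) atTop atTop :=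
  tendsto_log_atTop.comp tendsto_natCast_atTop_atTop

lemma tendsto_ceil_rpow_atTop {β : ℝ} (hβ : 0 < β) :
    Tendsto (fun n : ℕ => ⌈(n : ℝ) ^ β⌉₊) atTop atTop :=
  tendsto_nat_ceil_atTop.comp ((tendsto_rpow_atTop hβ).comp tendsto_natCast_atTop_atTop)

lemma eventually_div_log_lt {u : ℕ → ℝ} {C e a : ℝ} (hea : e < a)
    (hu : ∀ᶠ n : ℕ in atTop, u n ≤ C + e * log n) : ∀ᶠ n in atTop, u n / log n < a := by
  have hC := (tendsto_const_nhds (x := C)).div_atTop tendsto_log_natCast_atTop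
  filter_upwards [hu, hC.eventually (eventually_lt_nhds (sub_pos.2 hea)),
    tendsto_log_natCast_atTop.eventually_gt_atTop 0] with n hn hCn hlog
  calc u n / log n ≤ (C + e * log n) / log n := by gcongr
    _ = C / log n + e := by field_simp
    _ < a := by linarith

lemma eventually_lt_div_log {u : ℕ → ℝ} {C e a : ℝ} (hae : a < e)
    (hu : ∀ᶠ n : ℕ in atTop, C + e * log n ≤ u n) : ∀ᶠ n in atTop, a < u n / log n := by
  have := eventually_div_log_lt (u := fun n => -u n) (C := -C) (neg_lt_neg hae)
    (hu.mono fun n hn => by linarith)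
  filter_upwards [this] with n hn
  rw [neg_div] at hn
  linarith

lemma tendsto_log_ceil_rpow_div_log {β : ℝ} (hβ : 0 < β) :
    Tendsto (fun n : ℕ => log ⌈(n : ℝ) ^ β⌉₊ / log n) atTop (𝓝 β) := by
  refine tendsto_order.2 ⟨fun a ha => eventually_lt_div_log (C := 0) ha ?_,
    fun a ha => eventually_div_log_lt (C := log 2) ha ?_⟩
  all_goals filter_upwards [eventually_ge_atTop 1] with n hn
  all_goals have hpow : 1 ≤ (n : ℝ) ^ β := one_le_rpow (by exact_mod_cast hn) hβ.le
  all_goals rw [← log_rpow (by positivity)]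
  · rw [zero_add]
    exact log_le_log (by positivity) (Nat.le_ceil _)
  · rw [← log_mul two_ne_zero (by positivity)]
    refine log_le_log (by positivity) ?_
    linarith [Nat.ceil_lt_add_one (by positivity : 0 ≤ (n : ℝ) ^ β)]

/-- `T` is the common tail `G(x) = P(|aᵢⱼ| > x)` and `b` its normalizing sequence. -/
structure IsTailNormalization (α : ℝ) (T : ℝ → ℝ) (b : ℕ → ℝ) : Prop where
  pos : ∀ n, 0 < b n
  tail_nonneg : ∀ x, 0 < x → 0 ≤ T x
  tail_antitoneOn : AntitoneOn T (Ioi 0)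
  tendsto : ∀ x > 0,
    Tendsto (fun n : ℕ => (n : ℝ) ^ 2 / 2 * T (b n * x)) atTop (𝓝 (x ^ (-α)))

namespace IsTailNormalization

variable {α : ℝ} {T : ℝ → ℝ} {b : ℕ → ℝ}

/-- If `b_m x ≤ b_n y` with `n ≤ r m`, the monotonicity of `T` would give
`n² T(b_n y) ≤ r² m² T(b_m x)`, which the limits `2 y^{-α}` and `2 r² x^{-α}` forbid. -/
lemma exists_forall_mul_lt_mul {x y r : ℝ} (hb : IsTailNormalization α T b) (hx : 0 < x)
    (hy : 0 < y) (hr : 0 < r) (hxy : x ^ (-α) * r ^ 2 < y ^ (-α)) :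
    ∃ N, ∀ m n : ℕ, N ≤ m → N ≤ n → (n : ℝ) ≤ r * m → b n * y < b m * x := by
  obtain ⟨B, hxB, hBy⟩ := exists_between hxy
  obtain ⟨A, hxA, hAB⟩ := exists_between ((lt_div_iff₀ (by positivity)).2 hxB)
  obtain ⟨N₁, hA⟩ :=
    eventually_atTop.1 ((hb.tendsto x hx).eventually (eventually_lt_nhds hxA))
  obtain ⟨N₂, hB⟩ :=
    eventually_atTop.1 ((hb.tendsto y hy).eventually (eventually_gt_nhds hBy))
  refine ⟨max N₁ N₂, fun m n hm hn hnm => ?_⟩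
  by_contra! hle
  have hmono : T (b n * y) ≤ T (b m * x) :=
    hb.tail_antitoneOn (mul_pos (hb.pos m) hx) (mul_pos (hb.pos n) hy) hle
  have hsq : (n : ℝ) ^ 2 ≤ r ^ 2 * m ^ 2 := by
    rw [← mul_pow]; exact pow_le_pow_left₀ (Nat.cast_nonneg n) hnm 2
  have hTm := hA m (le_of_max_le_left hm)
  have hTn := hB n (le_of_max_le_right hn)
  have hT0 := hb.tail_nonneg _ (mul_pos (hb.pos m) hx)
  have : B < r ^ 2 * A := by
    calc B < (n : ℝ) ^ 2 / 2 * T (b n * y) := hTn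
      _ ≤ r ^ 2 * ((m : ℝ) ^ 2 / 2 * T (b m * x)) := by nlinarith
      _ ≤ r ^ 2 * A := by gcongr
  rw [lt_div_iff₀ (by positivity)] at hAB
  linarith

lemma exists_log_le_log_add (hb : IsTailNormalization α T b) (hα : 0 < α) :
    ∃ N, ∀ n m : ℕ, N ≤ n → n ≤ m → log (b n) ≤ log (b m) + log 2 := by
  have hcond : (2 : ℝ) ^ (-α) * 1 ^ 2 < 1 ^ (-α) := by
    rw [one_rpow, one_pow, mul_one]
    exact rpow_lt_one_of_one_lt_of_neg one_lt_two (neg_neg_of_pos hα)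
  obtain ⟨N, hN⟩ := hb.exists_forall_mul_lt_mul two_pos one_pos one_pos hcond
  refine ⟨N, fun n m hn hnm => ?_⟩
  have := hN m n (hn.trans hnm) hn (by simpa using hnm)
  rw [mul_one] at this
  rw [← log_mul (hb.pos m).ne' two_ne_zero]
  exact (log_lt_log (hb.pos n) this).le

lemma exists_log_doubling_le (hb : IsTailNormalization α T b) (hα : 0 < α) {e : ℝ}
    (he : 2 / α < e) :
    ∃ N, ∀ n : ℕ, N ≤ n → log (b (2 * n)) ≤ log (b n) + e * log 2 := by
  have hcond : ((2 : ℝ) ^ e) ^ (-α) * 2 ^ 2 < 1 ^ (-α) := by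
    rw [← rpow_mul zero_le_two, one_rpow, ← rpow_two, ← rpow_add two_pos]
    refine rpow_lt_one_of_one_lt_of_neg one_lt_two ?_
    rw [div_lt_iff₀ hα] at he
    linarith
  obtain ⟨N, hN⟩ := hb.exists_forall_mul_lt_mul (by positivity) one_pos two_pos hcond
  refine ⟨N, fun n hn => ?_⟩
  have := hN n (2 * n) hn (by omega) (by push_cast; exact le_rfl)
  rw [mul_one] at this
  rw [← log_rpow two_pos, ← log_mul (hb.pos n).ne' (by positivity)]
  exact (log_lt_log (hb.pos _) this).le

lemma exists_log_add_le_log_doubling (hb : IsTailNormalization α T b) (hα : 0 < α) {e : ℝ}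
    (he : e < 2 / α) :
    ∃ N, ∀ n : ℕ, N ≤ n → log (b n) + e * log 2 ≤ log (b (2 * n)) := by
  have hcond : (1 : ℝ) ^ (-α) * (1 / 2) ^ 2 < ((2 : ℝ) ^ e) ^ (-α) := by
    rw [← rpow_mul zero_le_two, one_rpow, one_mul, one_div, inv_pow, ← rpow_two,
      ← rpow_neg zero_le_two]
    refine rpow_lt_rpow_of_exponent_lt one_lt_two ?_
    rw [lt_div_iff₀ hα] at he
    linarith
  obtain ⟨N, hN⟩ := hb.exists_forall_mul_lt_mul one_pos (by positivity) one_half_pos hcond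
  refine ⟨N, fun n hn => ?_⟩
  have := hN (2 * n) n (by omega) hn (by push_cast; linarith)
  rw [mul_one] at this
  rw [← log_rpow two_pos, ← log_mul (hb.pos n).ne' (by positivity)]
  exact (log_lt_log (by have := hb.pos n; positivity) this).le

lemma tendsto_log_div_log (hb : IsTailNormalization α T b) (hα : 0 < α) :
    Tendsto (fun n : ℕ => log (b n) / log n) atTop (𝓝 (2 / α)) := by
  have hρ : 0 < 2 / α := by positivity
  obtain ⟨N₀, hmono⟩ := hb.exists_log_le_log_add hα
  refine tendsto_order.2 ⟨fun a ha => ?_, fun a ha => ?_⟩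
  · obtain ⟨e, hae, heρ⟩ := exists_between (max_lt ha hρ)
    obtain ⟨N₁, hdouble⟩ := hb.exists_log_add_le_log_doubling hα heρ
    obtain ⟨C, hC⟩ := exists_add_mul_log_le_of_doubling (N := max (max N₀ N₁) 1)
      (lt_max_of_lt_right one_pos) ((le_max_right a 0).trans hae.le)
      (fun n m hn => hmono n m (le_of_max_le_left (le_of_max_le_left hn)))
      (fun n hn => hdouble n (le_of_max_le_right (le_of_max_le_left hn)))
    exact eventually_lt_div_log ((le_max_left a 0).trans_lt hae) (eventually_atTop.2 ⟨_, hC⟩)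
  · obtain ⟨e, hρe, hea⟩ := exists_between ha
    obtain ⟨N₁, hdouble⟩ := hb.exists_log_doubling_le hα hρe
    obtain ⟨C, hC⟩ := exists_le_add_mul_log_of_doubling (N := max (max N₀ N₁) 1)
      (lt_max_of_lt_right one_pos) (by linarith)
      (fun n m hn => hmono n m (le_of_max_le_left (le_of_max_le_left hn)))
      (fun n hn => hdouble n (le_of_max_le_right (le_of_max_le_left hn)))
    exact eventually_div_log_lt hea (eventually_atTop.2 ⟨_, hC⟩)

/-- With `m = ⌈n^β'⌉`, `log b_m / log n = (log b_m / log m) (log m / log n) → 2β'/α`, which is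
below the limit `2β/α` of `β log bₙ / log n`. -/
lemma eventually_le_rpow (hb : IsTailNormalization α T b) (hα : 0 < α) {β β' : ℝ}
    (hβ' : 0 < β') (hβ : β' < β) :
    ∀ᶠ n : ℕ in atTop, b ⌈(n : ℝ) ^ β'⌉₊ ≤ b n ^ β := by
  set m : ℕ → ℕ := fun n => ⌈(n : ℝ) ^ β'⌉₊
  have hm : Tendsto m atTop atTop := tendsto_ceil_rpow_atTop hβ'
  have hlim := hb.tendsto_log_div_log hα
  have hlt := ((hlim.comp hm).mul (tendsto_log_ceil_rpow_div_log hβ')).eventually_lt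
    (hlim.const_mul β) (by rw [mul_comm β]; exact mul_lt_mul_of_pos_left hβ (by positivity))
  filter_upwards [hlt, eventually_ge_atTop 2, hm.eventually (eventually_ge_atTop 2)]
    with n hn hn2 hmn
  have hlogn : 0 < log n := log_pos (by exact_mod_cast hn2)
  have hlogm : 0 < log (m n) := log_pos (by exact_mod_cast hmn)
  replace hn : log (b (m n)) / log (m n) * (log (m n) / log n) < β * (log (b n) / log n) := hn
  rw [div_mul_div_cancel₀ hlogm.ne', mul_div_assoc', div_lt_div_iff_of_pos_right hlogn,
    ← log_rpow (hb.pos n)] at hn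
  exact ((log_lt_log_iff (hb.pos _) (by have := hb.pos n; positivity)).1 hn).le

lemma eventually_tail_le (hb : IsTailNormalization α T b) :
    ∀ᶠ n : ℕ in atTop, T (b n) ≤ 3 / (n : ℝ) ^ 2 := by
  have h := (hb.tendsto 1 one_pos).eventually
    (eventually_lt_nhds (by norm_num : (1 : ℝ) ^ (-α) < 3 / 2))
  filter_upwards [h, eventually_ge_atTop 1] with n hn hn1
  have hn0 : (0 : ℝ) < n := by exact_mod_cast hn1
  rw [mul_one] at hn
  rw [le_div_iff₀ (by positivity)]
  linarith

lemma eventually_tail_rpow_le (hb : IsTailNormalization α T b) (hα : 0 < α) {β β' : ℝ}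
    (hβ' : 0 < β') (hβ : β' < β) :
    ∀ᶠ n : ℕ in atTop, T (b n ^ β) ≤ 3 / ((n : ℝ) ^ β') ^ 2 := by
  filter_upwards [hb.eventually_le_rpow hα hβ' hβ,
    (tendsto_ceil_rpow_atTop hβ').eventually hb.eventually_tail_le,
    eventually_ge_atTop 1] with n hle htail hn
  have hpos : 0 < (n : ℝ) ^ β' := rpow_pos_of_pos (by exact_mod_cast hn) _
  calc T (b n ^ β) ≤ T (b ⌈(n : ℝ) ^ β'⌉₊) :=
        hb.tail_antitoneOn (hb.pos _) (rpow_pos_of_pos (hb.pos n) _) hle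
    _ ≤ 3 / (⌈(n : ℝ) ^ β'⌉₊ : ℝ) ^ 2 := htail
    _ ≤ 3 / ((n : ℝ) ^ β') ^ 2 := by gcongr; exact Nat.le_ceil _

lemma tendsto_cube_mul_sq_tail (hb : IsTailNormalization α T b) (hα : 0 < α) {β : ℝ}
    (hβ : 3 / 4 < β) :
    Tendsto (fun n : ℕ => (n : ℝ) ^ 3 * T (b n ^ β) ^ 2) atTop (𝓝 0) := by
  obtain ⟨β', hβ'34, hβ'β⟩ := exists_between hβ
  have hdecay : Tendsto (fun n : ℕ => 9 * (n : ℝ) ^ (-(4 * β' - 3))) atTop (𝓝 0) := by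
    have := ((tendsto_rpow_neg_atTop (by linarith : 0 < 4 * β' - 3)).comp
      tendsto_natCast_atTop_atTop).const_mul 9
    rwa [mul_zero] at this
  refine squeeze_zero' (Eventually.of_forall fun n => by positivity) ?_ hdecay
  filter_upwards [hb.eventually_tail_rpow_le hα (by linarith) hβ'β,
    eventually_ge_atTop 1] with n hT hn
  have hn0 : (0 : ℝ) < n := by exact_mod_cast hn
  have hpow : (((n : ℝ) ^ β') ^ 2) ^ 2 = (n : ℝ) ^ 3 * (n : ℝ) ^ (4 * β' - 3) := by
    rw [← pow_mul, ← rpow_natCast, ← rpow_mul hn0.le, ← rpow_natCast _ 3, ← rpow_add hn0]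
    congr 1
    push_cast
    ring
  calc (n : ℝ) ^ 3 * T (b n ^ β) ^ 2 ≤ (n : ℝ) ^ 3 * (3 / ((n : ℝ) ^ β') ^ 2) ^ 2 := by
        gcongr
        exact hb.tail_nonneg _ (rpow_pos_of_pos (hb.pos n) _)
    _ = 9 * (n : ℝ) ^ (-(4 * β' - 3)) := by
        rw [rpow_neg hn0.le, div_pow, hpow]
        field_simp
        norm_num

end IsTailNormalization

section RandomMatrix

variable {Ω : Type*} [MeasurableSpace Ω] {μ : Measure Ω}

lemma antitoneOn_of_measure_lt_abs {X : Ω → ℝ} {T : ℝ → ℝ} (hT : ∀ x, 0 < x → 0 ≤ T x)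
    (htail : ∀ x, 0 < x → μ {ω | x < |X ω|} = ENNReal.ofReal (T x)) :
    AntitoneOn T (Ioi 0) := by
  intro x hx y hy hxy
  have hsub : {ω | y < |X ω|} ⊆ {ω | x < |X ω|} := fun ω hω => hxy.trans_lt hω
  have := measure_mono (μ := μ) hsub
  rwa [htail x hx, htail y hy, ENNReal.ofReal_le_ofReal_iff (hT x hx)] at this

variable {ι : Type*} [LinearOrder ι]

def upperIndex (i j : ι) : {q : ι × ι // q.1 ≤ q.2} := ⟨(min i j, max i j), min_le_max⟩

lemma upperIndex_injective (i : ι) : Function.Injective (upperIndex i) := by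
  intro j j' h
  simp only [upperIndex, Subtype.mk.injEq, Prod.mk.injEq] at h
  rcases le_total i j with hj | hj <;> rcases le_total i j' with hj' | hj' <;> simp_all

lemma apply_upperIndex {β : Type*} {X : ι → ι → β} (hsymm : ∀ i j, X i j = X j i) (i j : ι) :
    X (upperIndex i j).1.1 (upperIndex i j).1.2 = X i j := by
  rcases le_total i j with h | h <;> simp [upperIndex, h, hsymm j i]

lemma measure_exists_two_in_row_le [Fintype ι] {X : ι → ι → Ω → ℝ}
    (hsymm : ∀ i j, X i j = X j i)
    (hindep : iIndepFun (fun q : {q : ι × ι // q.1 ≤ q.2} => X q.1.1 q.1.2) μ)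
    {S : Set ℝ} (hS : MeasurableSet S) {p : ℝ≥0∞}
    (hp : ∀ i j, i ≤ j → μ (X i j ⁻¹' S) ≤ p) :
    μ {ω | ∃ i j j', j ≠ j' ∧ X i j ω ∈ S ∧ X i j' ω ∈ S} ≤ Fintype.card ι ^ 3 * p ^ 2 := by
  classical
  set E : ι × ι × ι → Set Ω := fun q =>
    if q.2.1 = q.2.2 then ∅ else X q.1 q.2.1 ⁻¹' S ∩ X q.1 q.2.2 ⁻¹' S
  have hsub : {ω | ∃ i j j', j ≠ j' ∧ X i j ω ∈ S ∧ X i j' ω ∈ S} ⊆ ⋃ q, E q := by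
    rintro ω ⟨i, j, j', hne, hj, hj'⟩
    exact mem_iUnion.2 ⟨(i, j, j'), by simp [E, hne, hj, hj']⟩
  have hentry : ∀ i j, μ (X i j ⁻¹' S) ≤ p := fun i j => by
    simpa only [apply_upperIndex hsymm] using hp _ _ (upperIndex i j).2
  have hE : ∀ q, μ (E q) ≤ p ^ 2 := by
    rintro ⟨i, j, j'⟩
    by_cases hne : j = j'
    · simp [E, hne]
    · have hind := hindep.indepFun ((upperIndex_injective i).ne hne)
      simp only [apply_upperIndex hsymm] at hind
      simp only [E, hne, if_false]
      rw [hind.measure_inter_preimage_eq_mul _ _ hS hS, sq]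
      exact mul_le_mul' (hentry i j) (hentry i j')
  calc μ _ ≤ μ (⋃ q, E q) := measure_mono hsub
    _ ≤ ∑ q, μ (E q) := measure_iUnion_fintype_le μ E
    _ ≤ Finset.univ.card • p ^ 2 := Finset.sum_le_card_nsmul _ _ _ fun q _ => hE q
    _ = Fintype.card ι ^ 3 * p ^ 2 := by
        rw [Finset.card_univ, Fintype.card_prod, Fintype.card_prod, nsmul_eq_mul]
        push_cast
        ring

end RandomMatrix

theorem stmt_12_general {Ω : Type*} [MeasurableSpace Ω] (μ : Measure Ω) [IsProbabilityMeasure μ]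
    (a : (n : ℕ) → Fin n → Fin n → Ω → ℝ)
    (hsymm : ∀ n (i j : Fin n) ω, a n i j ω = a n j i ω)
    (hindep : ∀ n, iIndepFun
      (fun q : {q : Fin n × Fin n // q.1 ≤ q.2} => a n q.1.1 q.1.2) μ)
    (α : ℝ) (hα : 0 < α)
    (h : ℝ → ℝ) (hpos : ∀ x > 0, 0 < h x)
    (htail : ∀ n (i j : Fin n), i ≤ j → ∀ x : ℝ, 0 < x →
      μ {ω | x < |a n i j ω|} = ENNReal.ofReal (h x / x ^ α))
    (b : ℕ → ℝ) (hb : ∀ n, 0 < b n)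
    (hbn : ∀ x > 0, Tendsto
      (fun n : ℕ => ((n : ℝ) ^ 2 / 2) * (h (b n * x) / (b n * x) ^ α))
      atTop (nhds (x ^ (-α)))) :
    ∀ δ : ℝ, 0 < δ →
      Tendsto (fun n : ℕ =>
          μ {ω | ∃ i j j' : Fin n, j ≠ j' ∧
            b n ^ ((3 : ℝ) / 4 + δ) < |a n i j ω| ∧
            b n ^ ((3 : ℝ) / 4 + δ) < |a n i j' ω|})
        atTop (nhds 0) := by
  intro δ hδ
  set T : ℝ → ℝ := fun x => h x / x ^ α
  have hT0 : ∀ x, 0 < x → 0 ≤ T x := fun x hx =>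
    (div_pos (hpos x hx) (rpow_pos_of_pos hx α)).le
  have hnorm : IsTailNormalization α T b :=
    ⟨hb, hT0, antitoneOn_of_measure_lt_abs hT0 (htail 1 0 0 le_rfl), hbn⟩
  have hrow : ∀ n : ℕ, μ {ω | ∃ i j j' : Fin n, j ≠ j' ∧
      b n ^ ((3 : ℝ) / 4 + δ) < |a n i j ω| ∧ b n ^ ((3 : ℝ) / 4 + δ) < |a n i j' ω|} ≤
      ENNReal.ofReal ((n : ℝ) ^ 3 * T (b n ^ ((3 : ℝ) / 4 + δ)) ^ 2) := by
    intro n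
    have ht := rpow_pos_of_pos (hb n) ((3 : ℝ) / 4 + δ)
    rw [ENNReal.ofReal_mul (by positivity), ENNReal.ofReal_pow (hT0 _ ht),
      ENNReal.ofReal_pow n.cast_nonneg, ENNReal.ofReal_natCast]
    simpa using measure_exists_two_in_row_le (fun i j => funext (hsymm n i j)) (hindep n)
      (measurableSet_lt measurable_const measurable_abs) fun i j hij => (htail n i j hij _ ht).le
  have hlim :=
    ENNReal.tendsto_ofReal (hnorm.tendsto_cube_mul_sq_tail hα (lt_add_of_pos_right _ hδ))
  rw [ENNReal.ofReal_zero] at hlim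
  exact tendsto_of_tendsto_of_tendsto_of_le_of_le tendsto_const_nhds hlim (fun _ => zero_le) hrow

/-- for any `δ > 0`, with probability tending to 1 no row contains
two entries exceeding `bₙ^{3/4 + δ}` in absolute value. -/
theorem stmt_12 {Ω : Type*} [MeasurableSpace Ω] (μ : Measure Ω) [IsProbabilityMeasure μ]
    (a : (n : ℕ) → Fin n → Fin n → Ω → ℝ)
    (hmeas : ∀ n i j, Measurable (a n i j))
    (hsymm : ∀ n (i j : Fin n) ω, a n i j ω = a n j i ω)
    (hindep : ∀ n, iIndepFun
      (fun q : {q : Fin n × Fin n // q.1 ≤ q.2} => a n q.1.1 q.1.2) μ)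
    (α : ℝ) (hα : 0 < α) (hα2 : α < 2)
    (h : ℝ → ℝ) (hpos : ∀ x > 0, 0 < h x)
    (hslow : ∀ t > 0, Tendsto (fun x : ℝ => h (t * x) / h x) atTop (nhds 1))
    (htail : ∀ n (i j : Fin n), i ≤ j → ∀ x : ℝ, 0 < x →
      μ {ω | x < |a n i j ω|} = ENNReal.ofReal (h x / x ^ α))
    (b : ℕ → ℝ) (hb : ∀ n, 0 < b n)
    (hbn : ∀ x > 0, Tendsto
      (fun n : ℕ => ((n : ℝ) ^ 2 / 2) * (h (b n * x) / (b n * x) ^ α))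
      atTop (nhds (x ^ (-α)))) :
    ∀ δ : ℝ, 0 < δ →
      Tendsto (fun n : ℕ =>
          μ {ω | ∃ i j j' : Fin n, j ≠ j' ∧
            b n ^ ((3 : ℝ) / 4 + δ) < |a n i j ω| ∧
            b n ^ ((3 : ℝ) / 4 + δ) < |a n i j' ω|})
        atTop (nhds 0) :=
  stmt_12_general μ a hsymm hindep α hα h hpos htail b hb hbn
end

section
/- Under the heavy-tailed Wigner setup, as $n \to \infty$, the probability that there exists a row $i$ with $\max_{1 \le j \le n} |a_{ij}| > b_n^{3/4 + \alpha/8}$ and $(\sum_{1 \le j \le n} |a_{ij}|) - \max_{1 \le j \le n} |a_{ij}| > b_n^{3/4 + \alpha/8}$ tends to $0$. -/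
/-!
Write `B = bₙ^(3/4 + α/8)` and `T = bₙ^(3/4)`. If some row has its largest entry above `B` and
the sum of its other entries above `B`, then either a second entry of that row exceeds `T`, or
all other entries are at most `T` and the row sum of the entries truncated at `T` exceeds `B`.
By independence of the entries of a row, the first event has probability at most
`n³ P(|a| > B) P(|a| > T)`. In the second, the truncated entries are independent, bounded by `T`,
and have means `O(T^(1-γ))` for some `γ < min α 1`, so the Chernoff bound at parameter `1/T`
gives probability at most `n exp(-B/(2T)) = n exp(-bₙ^(α/8)/2)`.

Slow variation of `h` makes `P(|a| > 2x) / P(|a| > x) → 2^(-α)`; iterating this over dyadic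
blocks gives the Potter bounds `x^(-α-ε) ≲ P(|a| > x) ≲ x^(-α+ε)`. Together with
`n² P(|a| > bₙ) → 2` they bound both terms by negative powers of `bₙ → ∞`.
-/

open MeasureTheory ProbabilityTheory Filter Asymptotics Set Topology Real
open scoped ENNReal

theorem le_of_map_two_mul_le {ψ : ℝ → ℝ} {x₀ M : ℝ} (hx₀ : 0 < x₀)
    (hψ : ∀ x ≥ x₀, ψ (2 * x) ≤ ψ x) (hM : ∀ x ∈ Icc x₀ (2 * x₀), ψ x ≤ M) :
    ∀ x ≥ x₀, ψ x ≤ M := by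
  have key : ∀ k : ℕ, ∀ x ∈ Icc x₀ (2 ^ (k + 1) * x₀), ψ x ≤ M := by
    intro k
    induction k with
    | zero => simpa using hM
    | succ k ih =>
      rintro x ⟨hx₀x, hxk⟩
      by_cases hx : x ≤ 2 * x₀
      · exact hM x ⟨hx₀x, hx⟩
      · have hhalf : x / 2 ∈ Icc x₀ (2 ^ (k + 1) * x₀) :=
          ⟨by linarith, by rw [pow_succ] at hxk; linarith⟩
        calc ψ x = ψ (2 * (x / 2)) := by ring_nf
          _ ≤ ψ (x / 2) := hψ _ hhalf.1
          _ ≤ M := ih _ hhalf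
  intro x hx
  obtain ⟨k, hk⟩ := pow_unbounded_of_one_lt (x / x₀) one_lt_two
  refine key k x ⟨hx, ?_⟩
  rw [div_lt_iff₀ hx₀] at hk
  rw [pow_succ]
  nlinarith [pow_pos (two_pos : (0 : ℝ) < 2) k]

theorem tendsto_doubling_ratio_div_rpow {h : ℝ → ℝ} (α : ℝ)
    (hh : Tendsto (fun x => h (2 * x) / h x) atTop (𝓝 1)) :
    Tendsto (fun x => h (2 * x) / (2 * x) ^ α / (h x / x ^ α)) atTop (𝓝 (2 ^ (-α))) := by
  rw [← one_mul ((2 : ℝ) ^ (-α))]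
  refine (hh.mul_const _).congr' ?_
  filter_upwards [eventually_gt_atTop 0] with x hx
  rw [mul_rpow zero_le_two hx.le, rpow_neg zero_le_two]
  have : x ^ α ≠ 0 := (rpow_pos_of_pos hx α).ne'
  field_simp

section RegularVariation

variable {g : ℝ → ℝ} {α : ℝ}

theorem isBigO_rpow_neg_of_lt (hg_anti : AntitoneOn g (Ioi 0)) (hg_pos : ∀ x > 0, 0 < g x)
    (hg : Tendsto (fun x => g (2 * x) / g x) atTop (𝓝 (2 ^ (-α)))) {r : ℝ} (hr₀ : 0 ≤ r)
    (hr : r < α) : g =O[atTop] fun x => x ^ (-r) := by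
  have hlt : (2 : ℝ) ^ (-α) < 2 ^ (-r) := rpow_lt_rpow_of_exponent_lt one_lt_two (by linarith)
  obtain ⟨x₀, hx₀⟩ :=
    eventually_atTop.1 ((hg.eventually_lt_const hlt).and (eventually_gt_atTop 0))
  have hx₀pos : 0 < x₀ := (hx₀ x₀ le_rfl).2
  have hψ := le_of_map_two_mul_le (ψ := fun x => g x * x ^ r) (M := g x₀ * (2 * x₀) ^ r) hx₀pos
    (fun x hx => by
      obtain ⟨hdiv, hxpos⟩ := hx₀ x hx
      have h2x : g (2 * x) < 2 ^ (-r) * g x := (div_lt_iff₀ (hg_pos x hxpos)).1 hdiv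
      calc g (2 * x) * (2 * x) ^ r = g (2 * x) * 2 ^ r * x ^ r := by
            rw [mul_rpow zero_le_two hxpos.le]; ring
        _ ≤ 2 ^ (-r) * g x * 2 ^ r * x ^ r := by gcongr
        _ = g x * x ^ r := by rw [rpow_neg zero_le_two]; field_simp)
    (fun x hx => by
      have hxpos : 0 < x := hx₀pos.trans_le hx.1
      exact mul_le_mul (hg_anti hx₀pos hxpos hx.1) (rpow_le_rpow hxpos.le hx.2 hr₀)
        (rpow_nonneg hxpos.le r) (hg_pos x₀ hx₀pos).le)
  refine IsBigO.of_bound (g x₀ * (2 * x₀) ^ r) ?_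
  filter_upwards [eventually_ge_atTop x₀] with x hx
  have hxpos : 0 < x := hx₀pos.trans_le hx
  rw [norm_of_nonneg (hg_pos x hxpos).le, norm_of_nonneg (rpow_nonneg hxpos.le _),
    rpow_neg hxpos.le, ← div_eq_mul_inv, le_div_iff₀ (rpow_pos_of_pos hxpos r)]
  exact hψ x hx

theorem rpow_neg_isBigO_of_lt (hg_anti : AntitoneOn g (Ioi 0)) (hg_pos : ∀ x > 0, 0 < g x)
    (hg : Tendsto (fun x => g (2 * x) / g x) atTop (𝓝 (2 ^ (-α)))) {r : ℝ} (hr₀ : 0 ≤ r)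
    (hr : α < r) : (fun x => x ^ (-r)) =O[atTop] g := by
  have hlt : (2 : ℝ) ^ (-r) < 2 ^ (-α) := rpow_lt_rpow_of_exponent_lt one_lt_two (by linarith)
  obtain ⟨x₀, hx₀⟩ :=
    eventually_atTop.1 ((hg.eventually_const_lt hlt).and (eventually_gt_atTop 0))
  have hx₀pos : 0 < x₀ := (hx₀ x₀ le_rfl).2
  have hc : 0 < g (2 * x₀) * x₀ ^ r := mul_pos (hg_pos _ (by positivity)) (rpow_pos_of_pos hx₀pos r)
  have hψ := le_of_map_two_mul_le (ψ := fun x => -(g x * x ^ r)) (M := -(g (2 * x₀) * x₀ ^ r))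
    hx₀pos
    (fun x hx => by
      obtain ⟨hdiv, hxpos⟩ := hx₀ x hx
      have h2x : 2 ^ (-r) * g x < g (2 * x) := (lt_div_iff₀ (hg_pos x hxpos)).1 hdiv
      rw [neg_le_neg_iff]
      calc g x * x ^ r = 2 ^ (-r) * g x * 2 ^ r * x ^ r := by
            rw [rpow_neg zero_le_two]; field_simp
        _ ≤ g (2 * x) * 2 ^ r * x ^ r := by gcongr
        _ = g (2 * x) * (2 * x) ^ r := by rw [mul_rpow zero_le_two hxpos.le]; ring)
    (fun x hx => by
      have hxpos : 0 < x := hx₀pos.trans_le hx.1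
      rw [neg_le_neg_iff]
      exact mul_le_mul (hg_anti hxpos (mem_Ioi.2 (by positivity)) hx.2)
        (rpow_le_rpow hx₀pos.le hx.1 hr₀) (rpow_nonneg hx₀pos.le r) (hg_pos x hxpos).le)
  refine IsBigO.of_bound (g (2 * x₀) * x₀ ^ r)⁻¹ ?_
  filter_upwards [eventually_ge_atTop x₀] with x hx
  have hxpos : 0 < x := hx₀pos.trans_le hx
  rw [norm_of_nonneg (hg_pos x hxpos).le, norm_of_nonneg (rpow_nonneg hxpos.le _),
    rpow_neg hxpos.le, inv_mul_eq_div, le_div_iff₀ hc, inv_mul_le_iff₀ (rpow_pos_of_pos hxpos r)]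
  have := neg_le_neg_iff.1 (hψ x hx)
  linarith


end RegularVariation

theorem exists_le_mul_rpow_neg_of_isBigO {f : ℝ → ℝ} {γ : ℝ}
    (hf : f =O[atTop] fun x => x ^ (-γ)) :
    ∃ C x₁ : ℝ, 0 ≤ C ∧ 0 ≤ x₁ ∧ ∀ t > x₁, f t ≤ C * t ^ (-γ) := by
  obtain ⟨C, hC, hCf⟩ := hf.exists_pos
  obtain ⟨x₀, hx₀⟩ := eventually_atTop.1 hCf.bound
  refine ⟨C, max x₀ 0, hC.le, le_max_right _ _, fun t ht => ?_⟩
  have hbound := hx₀ t ((le_max_left _ _).trans ht.le)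
  rw [norm_of_nonneg (rpow_nonneg ((le_max_right _ _).trans ht.le) _)] at hbound
  exact (le_abs_self _).trans hbound

/-- Exponents for the two terms of the bound, with `β = 3/4 + α/8` and `τ = 3/4`: `q` and `s`
are the Potter exponents of the tail from above and below (so `n = O(bₙ^(s/2))`), `γ` the one used
for the truncated means. The first inequality makes `n³ P(|a| > bₙ^β) P(|a| > bₙ^τ) → 0`, the
second is the Chernoff condition `n E[min |a| bₙ^τ] = o(bₙ^β)`. Witnesses:
`q, s = α ∓ α²(2 - α)/64` and `γ = 4α/(6 + α)`. -/
theorem exists_exponents {α : ℝ} (hα : 0 < α) (hα2 : α < 2) :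
    ∃ q s γ : ℝ, 0 ≤ q ∧ q < α ∧ α < s ∧ 0 ≤ γ ∧ γ < α ∧ γ < 1 ∧
      3 * (s / 2) < (3 / 4 + α / 8 + 3 / 4) * q ∧ s / 2 + 3 / 4 * (1 - γ) < 3 / 4 + α / 8 := by
  set ε := α ^ 2 * (2 - α) / 64 with hε
  have h2α : 0 < 2 - α := by linarith
  have hε0 : 0 < ε := by positivity
  have hε_cube : ε * (24 + α) < α ^ 2 := by nlinarith [mul_pos hα hα, mul_pos (mul_pos hα hα) hα]
  have hε_chernoff : ε * (6 + α) < 3 * α * (2 - α) / 4 := by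
    nlinarith [mul_pos hα h2α, mul_pos (mul_pos hα hα) h2α]
  refine ⟨α - ε, α + ε, 4 * α / (6 + α), by nlinarith, by linarith, by linarith, by positivity,
    ?_, ?_, by nlinarith, ?_⟩
  · rw [div_lt_iff₀ (by linarith)]; nlinarith
  · rw [div_lt_one (by linarith)]; linarith
  · have hγ : 3 / 4 * (1 - 4 * α / (6 + α)) = 3 / 4 * (6 - 3 * α) / (6 + α) := by
      field_simp; ring
    have : 3 / 4 * (6 - 3 * α) / (6 + α) < 3 / 4 + α / 8 - (α + ε) / 2 := by
      rw [div_lt_iff₀ (by linarith)]; nlinarith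
    linarith

section NormalizingSequence

variable {g : ℝ → ℝ} {b : ℕ → ℝ}

theorem tendsto_comp_zero_of_tendsto_sq_mul
    (hb : Tendsto (fun n : ℕ => (n : ℝ) ^ 2 / 2 * g (b n)) atTop (𝓝 1)) :
    Tendsto (fun n => g (b n)) atTop (𝓝 0) := by
  have hinv : Tendsto (fun n : ℕ => 2 / (n : ℝ) ^ 2) atTop (𝓝 0) :=
    tendsto_const_nhds.div_atTop
      ((tendsto_pow_atTop two_ne_zero).comp tendsto_natCast_atTop_atTop)
  have hprod := hb.mul hinv
  rw [mul_zero] at hprod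
  refine hprod.congr' ?_
  filter_upwards [eventually_ne_atTop 0] with n hn
  field_simp

theorem tendsto_atTop_of_tendsto_comp_zero (hg_anti : AntitoneOn g (Ioi 0))
    (hg_pos : ∀ x > 0, 0 < g x) (hb_pos : ∀ n, 0 < b n)
    (hb : Tendsto (fun n => g (b n)) atTop (𝓝 0)) : Tendsto b atTop atTop := by
  refine tendsto_atTop.2 fun M => ?_
  have hM : 0 < max M 1 := lt_max_of_lt_right one_pos
  filter_upwards [hb.eventually_lt_const (hg_pos _ hM)] with n hn
  by_contra! hlt
  exact hn.not_ge (hg_anti (hb_pos n) hM (hlt.le.trans (le_max_left M 1)))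

theorem natCast_isBigO_rpow {s : ℝ} (hb_pos : ∀ n, 0 < b n) (hb_top : Tendsto b atTop atTop)
    (hg_pos : ∀ x > 0, 0 < g x) (hgs : (fun x => x ^ (-s)) =O[atTop] g)
    (hb : Tendsto (fun n : ℕ => (n : ℝ) ^ 2 / 2 * g (b n)) atTop (𝓝 1)) :
    (fun n : ℕ => (n : ℝ)) =O[atTop] fun n => b n ^ (s / 2) := by
  have hinv : (fun n => (g (b n))⁻¹) =O[atTop] fun n => (b n ^ (-s))⁻¹ :=
    (hgs.comp_tendsto hb_top).inv_rev
      (Eventually.of_forall fun n h => absurd h (rpow_pos_of_pos (hb_pos n) _).ne')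
  have hsq := ((hb.isBigO_one ℝ).mul hinv).const_mul_left 2
  refine IsBigO.of_pow two_ne_zero (hsq.congr (fun n => ?_) (fun n => ?_))
  · have := (hg_pos _ (hb_pos n)).ne'
    field_simp
    rfl
  · rw [Pi.pow_apply, ← rpow_natCast, ← rpow_mul (hb_pos n).le, rpow_neg (hb_pos n).le]
    simp

theorem tendsto_rpow_comp_zero_of_neg (hb_top : Tendsto b atTop atTop) {e : ℝ} (he : e < 0) :
    Tendsto (fun n => b n ^ e) atTop (𝓝 0) := by
  refine ((tendsto_rpow_neg_atTop (neg_pos.2 he)).comp hb_top).congr fun n => ?_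
  simp

theorem tendsto_natCast_cube_mul_tail (hb_pos : ∀ n, 0 < b n) (hb_top : Tendsto b atTop atTop)
    {p q β τ : ℝ} (hβ : 0 < β) (hτ : 0 < τ)
    (hn : (fun n : ℕ => (n : ℝ)) =O[atTop] fun n => b n ^ p)
    (hg : g =O[atTop] fun x => x ^ (-q)) (hexp : 3 * p < (β + τ) * q) :
    Tendsto (fun n : ℕ => (n : ℝ) ^ 3 * (g (b n ^ β) * g (b n ^ τ))) atTop (𝓝 0) := by
  have hgB := hg.comp_tendsto ((tendsto_rpow_atTop hβ).comp hb_top)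
  have hgT := hg.comp_tendsto ((tendsto_rpow_atTop hτ).comp hb_top)
  refine ((hn.pow 3).mul (hgB.mul hgT)).trans_tendsto
    ((tendsto_rpow_comp_zero_of_neg hb_top (by linarith : 3 * p - (β + τ) * q < 0)).congr
      fun n => ?_)
  have hbn := (hb_pos n).le
  simp only [Function.comp, ← rpow_natCast, ← rpow_mul hbn, ← rpow_add (hb_pos n)]
  ring_nf

theorem tendsto_natCast_mul_exp_chernoff (hb_pos : ∀ n, 0 < b n)
    (hb_top : Tendsto b atTop atTop) {m : ℕ → ℝ} {p κ β τ : ℝ} (hτβ : τ < β)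
    (hn : (fun n : ℕ => (n : ℝ)) =O[atTop] fun n => b n ^ p)
    (hm : m =O[atTop] fun n => b n ^ κ) (hexp : p + κ < β) :
    Tendsto (fun n : ℕ => (n : ℝ) * exp (((exp 1 - 1) * n * m n - b n ^ β) / b n ^ τ))
      atTop (𝓝 0) := by
  have hratio : Tendsto (fun n => (exp 1 - 1) * (n * m n) * (b n ^ β)⁻¹) atTop (𝓝 0) := by
    refine (((hn.mul hm).const_mul_left (exp 1 - 1)).mul (isBigO_refl _ _)).trans_tendsto
      ((tendsto_rpow_comp_zero_of_neg hb_top (by linarith : p + κ - β < 0)).congr fun n => ?_)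
    rw [← rpow_neg (hb_pos n).le, ← rpow_add (hb_pos n), ← rpow_add (hb_pos n)]
    ring_nf
  have hdecay : Tendsto (fun n => b n ^ p * exp (-(1 / 2) * b n ^ (β - τ))) atTop (𝓝 0) := by
    refine ((tendsto_rpow_mul_exp_neg_mul_atTop_nhds_zero (p / (β - τ)) _ one_half_pos).comp
      ((tendsto_rpow_atTop (sub_pos.2 hτβ)).comp hb_top)).congr fun n => ?_
    simp only [Function.comp, ← rpow_mul (hb_pos n).le]
    rw [mul_div_cancel₀ _ (by linarith : β - τ ≠ 0)]
  refine squeeze_zero' (Eventually.of_forall fun n => by positivity)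
    ?_ ((hn.mul (isBigO_refl _ _)).trans_tendsto hdecay)
  filter_upwards [hratio.eventually_le_const one_half_pos] with n hn_ratio
  have hβn := rpow_pos_of_pos (hb_pos n) β
  have hτn := rpow_pos_of_pos (hb_pos n) τ
  have hhalf : (exp 1 - 1) * (n * m n) ≤ 1 / 2 * b n ^ β := (mul_inv_le_iff₀ hβn).1 hn_ratio
  gcongr
  rw [rpow_sub (hb_pos n), div_le_iff₀ hτn, mul_assoc (-(1 / 2)), div_mul_cancel₀ _ hτn.ne']
  linarith

end NormalizingSequence

theorem injective_min_max {ι : Type*} [LinearOrder ι] (i : ι) :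
    Function.Injective fun j => (min i j, max i j) := by
  intro j j' h
  simp only [Prod.mk.injEq] at h
  rcases le_total i j with hj | hj <;> rcases le_total i j' with hj' | hj' <;>
    simp only [min_eq_left, min_eq_right, max_eq_left, max_eq_right, hj, hj'] at h <;>
    grind

theorem sum_sub_le_sum_min {ι : Type*} [Fintype ι] {y : ι → ℝ} {T : ℝ} (hy : ∀ j, 0 ≤ y j)
    (hT : 0 ≤ T) {j₀ : ι} (h : ∀ j ≠ j₀, y j ≤ T) : ∑ j, y j - y j₀ ≤ ∑ j, min (y j) T := by
  classical
  rw [← Finset.sum_erase_eq_sub (Finset.mem_univ j₀)]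
  calc ∑ j ∈ Finset.univ.erase j₀, y j = ∑ j ∈ Finset.univ.erase j₀, min (y j) T :=
        Finset.sum_congr rfl fun j hj => (min_eq_left (h j (Finset.ne_of_mem_erase hj))).symm
    _ ≤ ∑ j, min (y j) T :=
        Finset.sum_le_sum_of_subset_of_nonneg (Finset.subset_univ _)
          fun j _ _ => le_min (hy j) hT

theorem exp_le_one_add_mul_of_mem_Icc {u : ℝ} (hu : u ∈ Icc (0 : ℝ) 1) :
    exp u ≤ 1 + (exp 1 - 1) * u := by
  have key := convexOn_exp.2 (mem_univ 0) (mem_univ 1) (sub_nonneg.2 hu.2) hu.1 (by ring)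
  simp only [smul_eq_mul, mul_zero, mul_one, exp_zero, zero_add] at key
  linarith

section Probability

variable {Ω ι : Type*} [MeasurableSpace Ω] {μ : Measure Ω}

theorem antitoneOn_of_measure_lt_eq {Y : Ω → ℝ} {g : ℝ → ℝ}
    (hY : ∀ x > 0, μ {ω | x < Y ω} = ENNReal.ofReal (g x)) (hg : ∀ x > 0, 0 ≤ g x) :
    AntitoneOn g (Ioi 0) := by
  intro x hx y hy hxy
  rw [← ENNReal.ofReal_le_ofReal_iff (hg x hx), ← hY x hx, ← hY y hy]
  exact measure_mono fun ω (hω : y < Y ω) => hxy.trans_lt hω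

theorem iIndepFun_row [LinearOrder ι] (a : ι → ι → Ω → ℝ)
    (hsymm : ∀ i j, a i j = a j i)
    (hind : iIndepFun (fun q : {q : ι × ι // q.1 ≤ q.2} => a q.1.1 q.1.2) μ) (i : ι) :
    iIndepFun (a i) μ := by
  have hinj : Function.Injective
      fun j => (⟨(min i j, max i j), min_le_max⟩ : {q : ι × ι // q.1 ≤ q.2}) :=
    fun j j' h => injective_min_max i (congrArg Subtype.val h)
  convert hind.precomp hinj using 2 with j
  rcases le_total i j with h | h
  · simp [min_eq_left h, max_eq_right h]
  · simp [min_eq_right h, max_eq_left h, hsymm i j]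

variable [IsProbabilityMeasure μ]

theorem mgf_le_exp_of_mem_Icc {Z : Ω → ℝ} (hZ : Measurable Z) {T m : ℝ} (hT : 0 < T)
    (hZT : ∀ ω, Z ω ∈ Icc 0 T) (hm : μ[Z] ≤ m) :
    mgf Z μ T⁻¹ ≤ exp ((exp 1 - 1) * m / T) := by
  have hZint : Integrable Z μ :=
    Integrable.of_bound hZ.aestronglyMeasurable T
      (Eventually.of_forall fun ω => by rw [norm_of_nonneg (hZT ω).1]; exact (hZT ω).2)
  have hpt : ∀ ω, exp (T⁻¹ * Z ω) ≤ 1 + (exp 1 - 1) * T⁻¹ * Z ω := fun ω => by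
    have hmem : T⁻¹ * Z ω ∈ Icc (0 : ℝ) 1 :=
      ⟨by have := (hZT ω).1; positivity, by rw [inv_mul_le_one₀ hT]; exact (hZT ω).2⟩
    simpa [mul_assoc] using exp_le_one_add_mul_of_mem_Icc hmem
  have he1 : 0 ≤ exp 1 - 1 := by linarith [add_one_le_exp 1]
  calc mgf Z μ T⁻¹ ≤ ∫ ω, (1 + (exp 1 - 1) * T⁻¹ * Z ω) ∂μ :=
        integral_mono_of_nonneg (Eventually.of_forall fun ω => (exp_pos _).le)
          ((integrable_const 1).add (hZint.const_mul _)) (Eventually.of_forall hpt)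
    _ = 1 + (exp 1 - 1) * T⁻¹ * μ[Z] := by
        rw [integral_add (integrable_const 1) (hZint.const_mul _), integral_const_mul]
        simp
    _ ≤ 1 + (exp 1 - 1) * m / T := by
        rw [mul_div_right_comm, div_eq_mul_inv]
        gcongr
    _ ≤ exp ((exp 1 - 1) * m / T) := by linarith [add_one_le_exp ((exp 1 - 1) * m / T)]

theorem measureReal_le_sum_le_exp [Fintype ι] {Z : ι → Ω → ℝ} (hZ : ∀ j, Measurable (Z j))
    (hind : iIndepFun Z μ) {T m : ℝ} (hT : 0 < T) (hZT : ∀ j ω, Z j ω ∈ Icc 0 T)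
    (hm : ∀ j, μ[Z j] ≤ m) (B : ℝ) :
    μ.real {ω | B ≤ ∑ j, Z j ω} ≤
      exp (((exp 1 - 1) * Fintype.card ι * m - B) / T) := by
  have hS : ∀ ω, (∑ j, Z j) ω = ∑ j, Z j ω := fun ω => Finset.sum_apply ω _ _
  have hint : Integrable (fun ω => exp (T⁻¹ * (∑ j, Z j) ω)) μ := by
    refine Integrable.of_bound (by fun_prop) (exp (T⁻¹ * (Fintype.card ι * T))) ?_
    refine Eventually.of_forall fun ω => ?_
    rw [norm_of_nonneg (exp_pos _).le, exp_le_exp, hS]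
    gcongr
    calc ∑ j, Z j ω ≤ ∑ _j : ι, T := Finset.sum_le_sum fun j _ => (hZT j ω).2
      _ = Fintype.card ι * T := by simp
  have hchernoff := measure_ge_le_exp_mul_mgf (X := ∑ j, Z j) B (by positivity) hint
  simp only [hS] at hchernoff
  rw [hind.mgf_sum hZ] at hchernoff
  calc μ.real {ω | B ≤ ∑ j, Z j ω}
      ≤ exp (-T⁻¹ * B) * ∏ j, mgf (Z j) μ T⁻¹ := hchernoff
    _ ≤ exp (-T⁻¹ * B) * ∏ _j : ι, exp ((exp 1 - 1) * m / T) := by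
        gcongr with j
        · exact fun j _ => mgf_nonneg
        · exact mgf_le_exp_of_mem_Icc (hZ j) hT (hZT j) (hm j)
    _ = exp (((exp 1 - 1) * Fintype.card ι * m - B) / T) := by
        rw [Finset.prod_const, ← exp_nat_mul, ← exp_add, Finset.card_univ]
        congr 1
        field_simp
        ring

theorem integral_le_of_tail_le_rpow {W : Ω → ℝ} (hW : Measurable W) {T x₁ C γ : ℝ}
    (hWT : ∀ ω, W ω ∈ Icc 0 T) (hx₁ : 0 ≤ x₁) (hx₁T : x₁ ≤ T) (hC : 0 ≤ C) (hγ : γ < 1)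
    (htail : ∀ t > x₁, μ.real {ω | t < W ω} ≤ C * t ^ (-γ)) :
    μ[W] ≤ x₁ + C * T ^ (1 - γ) / (1 - γ) := by
  set F : ℝ → ℝ := fun t => μ.real {ω | t < W ω}
  have hF_anti : Antitone F := fun s t hst =>
    measureReal_mono fun ω (hω : t < W ω) => hst.trans_lt hω
  have hF_int : ∀ p q : ℝ, IntegrableOn F (Ioc p q) :=
    fun p q => (hF_anti.locallyIntegrable.integrableOn_isCompact isCompact_Icc).mono_set
      Ioc_subset_Icc_self
  have hWint : Integrable W μ :=
    Integrable.of_bound hW.aestronglyMeasurable T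
      (Eventually.of_forall fun ω => by rw [norm_of_nonneg (hWT ω).1]; exact (hWT ω).2)
  have hF_zero : ∀ t ∈ Ioi (0 : ℝ) \ Ioc 0 T, F t = 0 := by
    rintro t ⟨ht0, htT⟩
    have hTt : T < t := not_le.1 fun h => htT ⟨ht0, h⟩
    have hempty : {ω | t < W ω} = ∅ :=
      eq_empty_of_forall_notMem fun ω (hω : t < W ω) => by linarith [(hWT ω).2]
    simp only [F, hempty, measureReal_empty]
  have hsmall : ∫ t in Ioc 0 x₁, F t ≤ x₁ := by
    calc ∫ t in Ioc 0 x₁, F t ≤ ∫ _ in Ioc 0 x₁, (1 : ℝ) :=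
          setIntegral_mono_on (hF_int 0 x₁) (integrableOn_const measure_Ioc_lt_top.ne)
            measurableSet_Ioc fun t _ => measureReal_le_one
      _ = x₁ := by simp [hx₁]
  have hlarge : ∫ t in Ioc x₁ T, F t ≤ C * T ^ (1 - γ) / (1 - γ) := by
    have hγ' : 0 < 1 - γ := by linarith
    calc ∫ t in Ioc x₁ T, F t ≤ ∫ t in Ioc x₁ T, C * t ^ (-γ) :=
          setIntegral_mono_on (hF_int x₁ T)
            ((intervalIntegral.intervalIntegrable_rpow' (by linarith)).const_mul C).1
            measurableSet_Ioc fun t ht => htail t ht.1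
      _ = C * ((T ^ (1 - γ) - x₁ ^ (1 - γ)) / (1 - γ)) := by
          rw [← intervalIntegral.integral_of_le hx₁T, intervalIntegral.integral_const_mul,
            integral_rpow (Or.inl (by linarith))]
          ring_nf
      _ ≤ C * T ^ (1 - γ) / (1 - γ) := by
          rw [mul_div_assoc]
          gcongr
          linarith [rpow_nonneg hx₁ (1 - γ)]
  rw [hWint.integral_eq_integral_meas_lt (Eventually.of_forall fun ω => (hWT ω).1),
    setIntegral_eq_of_subset_of_forall_sdiff_eq_zero measurableSet_Ioi Ioc_subset_Ioi_self
      hF_zero, ← Ioc_union_Ioc_eq_Ioc hx₁ hx₁T, setIntegral_union (Ioc_disjoint_Ioc_of_le le_rfl)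
      measurableSet_Ioc (hF_int 0 x₁) (hF_int x₁ T)]
  linarith

theorem integral_min_abs_le {X : Ω → ℝ} (hX : Measurable X) {T x₁ C γ : ℝ} (hx₁ : 0 ≤ x₁)
    (hx₁T : x₁ ≤ T) (hT : 1 ≤ T) (hC : 0 ≤ C) (hγ : γ < 1)
    (htail : ∀ t > x₁, μ {ω | t < |X ω|} ≤ ENNReal.ofReal (C * t ^ (-γ))) :
    μ[fun ω => min |X ω| T] ≤ (x₁ + C / (1 - γ)) * T ^ (1 - γ) := by
  calc μ[fun ω => min |X ω| T] ≤ x₁ + C * T ^ (1 - γ) / (1 - γ) :=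
        integral_le_of_tail_le_rpow (hX.abs.min measurable_const)
          (fun ω => ⟨le_min (abs_nonneg _) (by linarith), min_le_right _ _⟩) hx₁ hx₁T hC hγ
          fun t ht => (measureReal_mono fun ω (hω : t < min |X ω| T) =>
            hω.trans_le (min_le_left _ _)).trans (ENNReal.toReal_le_of_le_ofReal
              (mul_nonneg hC (rpow_nonneg (hx₁.trans ht.le) _)) (htail t ht))
    _ ≤ (x₁ + C / (1 - γ)) * T ^ (1 - γ) := by
        have hT1 : 1 ≤ T ^ (1 - γ) := one_le_rpow hT (by linarith)
        rw [add_mul, mul_div_right_comm]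
        nlinarith

theorem measure_exists_heavy_row_le [Fintype ι] (X : ι → ι → Ω → ℝ)
    (hX : ∀ i j, Measurable (X i j)) (hrow : ∀ i, iIndepFun (X i) μ) {B T m : ℝ} {pB pT : ℝ≥0∞}
    (hT : 0 < T) (hpB : ∀ i j, μ {ω | B < |X i j ω|} ≤ pB)
    (hpT : ∀ i j, μ {ω | T < |X i j ω|} ≤ pT) (hm : ∀ i j, μ[fun ω => min |X i j ω| T] ≤ m) :
    μ {ω | ∃ i j₀, B < |X i j₀ ω| ∧ B < ∑ j, |X i j ω| - |X i j₀ ω|} ≤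
      Fintype.card ι ^ 3 * (pB * pT) +
        Fintype.card ι * ENNReal.ofReal (exp (((exp 1 - 1) * Fintype.card ι * m - B) / T)) := by
  set A := ⋃ i, ⋃ j₀, ⋃ j₁, {ω | j₁ ≠ j₀ ∧ B < |X i j₀ ω| ∧ T < |X i j₁ ω|}
  set C := ⋃ i, {ω | B ≤ ∑ j, min |X i j ω| T}
  have hsub : {ω | ∃ i j₀, B < |X i j₀ ω| ∧ B < ∑ j, |X i j ω| - |X i j₀ ω|} ⊆ A ∪ C := by
    rintro ω ⟨i, j₀, hB, hrest⟩
    by_cases hbig : ∃ j₁ ≠ j₀, T < |X i j₁ ω|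
    · obtain ⟨j₁, hne, hj₁⟩ := hbig
      exact Or.inl (mem_iUnion.2 ⟨i, mem_iUnion.2 ⟨j₀, mem_iUnion.2 ⟨j₁, hne, hB, hj₁⟩⟩⟩)
    · simp only [ne_eq, not_exists, not_and, not_lt] at hbig
      exact Or.inr (mem_iUnion.2 ⟨i, hrest.le.trans
        (sum_sub_le_sum_min (fun j => abs_nonneg _) hT.le hbig)⟩)
  have hA : ∀ i j₀ j₁, μ {ω | j₁ ≠ j₀ ∧ B < |X i j₀ ω| ∧ T < |X i j₁ ω|} ≤ pB * pT := by
    intro i j₀ j₁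
    by_cases hj : j₁ = j₀
    · simp [hj]
    have hind := ((hrow i).indepFun (Ne.symm hj)).measure_inter_preimage_eq_mul
      {x : ℝ | B < |x|} {x : ℝ | T < |x|} (measurableSet_lt measurable_const measurable_abs)
      (measurableSet_lt measurable_const measurable_abs)
    calc μ {ω | j₁ ≠ j₀ ∧ B < |X i j₀ ω| ∧ T < |X i j₁ ω|}
        = μ {ω | B < |X i j₀ ω|} * μ {ω | T < |X i j₁ ω|} := by
          refine (congrArg μ ?_).trans hind
          ext ω
          simp [hj]
      _ ≤ pB * pT := mul_le_mul' (hpB i j₀) (hpT i j₁)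
  have hC : ∀ i, μ {ω | B ≤ ∑ j, min |X i j ω| T} ≤
      ENNReal.ofReal (exp (((exp 1 - 1) * Fintype.card ι * m - B) / T)) := by
    intro i
    rw [← ofReal_measureReal]
    exact ENNReal.ofReal_le_ofReal <| measureReal_le_sum_le_exp
      (fun j => (hX i j).abs.min measurable_const)
      ((hrow i).comp (fun _ x => min |x| T) fun _ => by fun_prop) hT
      (fun j ω => ⟨le_min (abs_nonneg _) hT.le, min_le_right _ _⟩) (hm i) B
  calc _ ≤ μ A + μ C := (measure_mono hsub).trans (measure_union_le A C)
    _ ≤ ∑ _i : ι, ∑ _j₀ : ι, ∑ _j₁ : ι, pB * pT +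
          ∑ _i : ι, ENNReal.ofReal (exp (((exp 1 - 1) * Fintype.card ι * m - B) / T)) := by
        gcongr
        · refine (measure_iUnion_fintype_le μ _).trans (Finset.sum_le_sum fun i _ => ?_)
          refine (measure_iUnion_fintype_le μ _).trans (Finset.sum_le_sum fun j₀ _ => ?_)
          exact (measure_iUnion_fintype_le μ _).trans (Finset.sum_le_sum fun j₁ _ => hA i j₀ j₁)
        · exact (measure_iUnion_fintype_le μ _).trans (Finset.sum_le_sum fun i _ => hC i)
    _ = _ := by simp [pow_succ, mul_assoc]

theorem measure_exists_heavy_row_le_of_tail [Fintype ι] (X : ι → ι → Ω → ℝ)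
    (hX : ∀ i j, Measurable (X i j)) (hrow : ∀ i, iIndepFun (X i) μ) {g : ℝ → ℝ}
    (hg : ∀ i j x, 0 < x → μ {ω | x < |X i j ω|} = ENNReal.ofReal (g x))
    (hg_nonneg : ∀ x > 0, 0 ≤ g x) {B T x₁ C γ : ℝ} (hB : 0 < B) (hx₁ : 0 ≤ x₁) (hx₁T : x₁ ≤ T)
    (hT : 1 ≤ T) (hC : 0 ≤ C) (hγ : γ < 1) (hgC : ∀ t > x₁, g t ≤ C * t ^ (-γ)) :
    μ {ω | ∃ i j₀, B < |X i j₀ ω| ∧ B < ∑ j, |X i j ω| - |X i j₀ ω|} ≤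
      ENNReal.ofReal (Fintype.card ι ^ 3 * (g B * g T)) +
        ENNReal.ofReal (Fintype.card ι * exp (((exp 1 - 1) * Fintype.card ι *
          ((x₁ + C / (1 - γ)) * T ^ (1 - γ)) - B) / T)) := by
  have hT₀ : 0 < T := zero_lt_one.trans_le hT
  refine (measure_exists_heavy_row_le X hX hrow hT₀ (fun i j => (hg i j B hB).le)
    (fun i j => (hg i j T hT₀).le) fun i j => integral_min_abs_le (hX i j) hx₁ hx₁T hT hC hγ
      fun t ht => ?_).trans_eq ?_
  · rw [hg i j t (hx₁.trans_lt ht)]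
    exact ENNReal.ofReal_le_ofReal (hgC t ht)
  · rw [ENNReal.ofReal_mul (by positivity), ENNReal.ofReal_mul (hg_nonneg B hB),
      ENNReal.ofReal_mul (Nat.cast_nonneg _), ENNReal.ofReal_pow (Nat.cast_nonneg _),
      ENNReal.ofReal_natCast]

theorem tendsto_measure_exists_heavy_row {α : ℝ} (hα : 0 < α) (hα2 : α < 2)
    (a : (n : ℕ) → Fin n → Fin n → Ω → ℝ) (hmeas : ∀ n i j, Measurable (a n i j))
    (hrow : ∀ n i, iIndepFun (a n i) μ) {g : ℝ → ℝ}
    (hg : ∀ n (i j : Fin n) x, 0 < x → μ {ω | x < |a n i j ω|} = ENNReal.ofReal (g x))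
    (hg_pos : ∀ x > 0, 0 < g x) (hg_ratio : Tendsto (fun x => g (2 * x) / g x) atTop (𝓝 (2 ^ (-α))))
    {b : ℕ → ℝ} (hb : ∀ n, 0 < b n)
    (hb1 : Tendsto (fun n : ℕ => (n : ℝ) ^ 2 / 2 * g (b n)) atTop (𝓝 1)) :
    Tendsto (fun n : ℕ => μ {ω | ∃ i j₀ : Fin n, b n ^ ((3 : ℝ) / 4 + α / 8) < |a n i j₀ ω| ∧
      b n ^ ((3 : ℝ) / 4 + α / 8) < ∑ j, |a n i j ω| - |a n i j₀ ω|}) atTop (𝓝 0) := by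
  have hg_anti := antitoneOn_of_measure_lt_eq (hg 1 0 0) fun x hx => (hg_pos x hx).le
  have hb_top := tendsto_atTop_of_tendsto_comp_zero hg_anti hg_pos hb
    (tendsto_comp_zero_of_tendsto_sq_mul hb1)
  obtain ⟨q, s, γ, hq, hqα, hαs, hγ, hγα, hγ1, hcube, hchernoff⟩ := exists_exponents hα hα2
  have hn := natCast_isBigO_rpow hb hb_top hg_pos
    (rpow_neg_isBigO_of_lt hg_anti hg_pos hg_ratio (by linarith) hαs) hb1
  obtain ⟨C, x₁, hC, hx₁, hgC⟩ :=
    exists_le_mul_rpow_neg_of_isBigO (isBigO_rpow_neg_of_lt hg_anti hg_pos hg_ratio hγ hγα)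
  have hcube_lim := tendsto_natCast_cube_mul_tail hb hb_top (by positivity) (by norm_num) hn
    (isBigO_rpow_neg_of_lt hg_anti hg_pos hg_ratio hq hqα) hcube
  have hchernoff_lim := tendsto_natCast_mul_exp_chernoff hb hb_top
    (β := (3 : ℝ) / 4 + α / 8) (τ := 3 / 4) (by linarith) hn
    (((isBigO_refl _ _).const_mul_left (x₁ + C / (1 - γ))).congr_left
      fun n => by rw [rpow_mul (hb n).le]) hchernoff
  have hlim := (ENNReal.tendsto_ofReal hcube_lim).add (ENNReal.tendsto_ofReal hchernoff_lim)
  rw [ENNReal.ofReal_zero, add_zero] at hlim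
  refine tendsto_of_tendsto_of_tendsto_of_le_of_le' tendsto_const_nhds hlim
    (Eventually.of_forall fun _ => zero_le) ?_
  filter_upwards [((tendsto_rpow_atTop (by norm_num : (0 : ℝ) < 3 / 4)).comp
    hb_top).eventually_ge_atTop (max x₁ 1)] with n hT
  refine (measure_exists_heavy_row_le_of_tail (a n) (hmeas n) (hrow n) (hg n)
    (fun x hx => (hg_pos x hx).le) (rpow_pos_of_pos (hb n) _) hx₁ ((le_max_left _ _).trans hT)
    ((le_max_right _ _).trans hT) hC hγ1 hgC).trans_eq ?_
  simp only [Fintype.card_fin, Function.comp_apply]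

end Probability

/-- the probability that some row has both its maximal absolute
entry and the sum of the remaining absolute entries exceeding `bₙ^{3/4 + α/8}`
tends to `0`. -/
theorem stmt_13 {Ω : Type*} [MeasurableSpace Ω] (μ : Measure Ω) [IsProbabilityMeasure μ]
    (a : (n : ℕ) → Fin n → Fin n → Ω → ℝ)
    (hmeas : ∀ n i j, Measurable (a n i j))
    (hsymm : ∀ n (i j : Fin n) ω, a n i j ω = a n j i ω)
    (hindep : ∀ n, iIndepFun
      (fun q : {q : Fin n × Fin n // q.1 ≤ q.2} => a n q.1.1 q.1.2) μ)
    (α : ℝ) (hα : 0 < α) (hα2 : α < 2)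
    (h : ℝ → ℝ) (hpos : ∀ x > 0, 0 < h x)
    (hslow : ∀ t > 0, Tendsto (fun x : ℝ => h (t * x) / h x) atTop (nhds 1))
    (htail : ∀ n (i j : Fin n), i ≤ j → ∀ x : ℝ, 0 < x →
      μ {ω | x < |a n i j ω|} = ENNReal.ofReal (h x / x ^ α))
    (b : ℕ → ℝ) (hb : ∀ n, 0 < b n)
    (hbn : ∀ x > 0, Tendsto
      (fun n : ℕ => ((n : ℝ) ^ 2 / 2) * (h (b n * x) / (b n * x) ^ α))
      atTop (nhds (x ^ (-α)))) :
    Tendsto (fun n : ℕ =>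
        μ {ω | ∃ i j₀ : Fin n, (∀ j : Fin n, |a n i j ω| ≤ |a n i j₀ ω|) ∧
          b n ^ ((3 : ℝ) / 4 + α / 8) < |a n i j₀ ω| ∧
          b n ^ ((3 : ℝ) / 4 + α / 8) < (∑ j : Fin n, |a n i j ω|) - |a n i j₀ ω|})
      atTop (nhds 0) := by
  have htail_symm : ∀ n (i j : Fin n) x, 0 < x →
      μ {ω | x < |a n i j ω|} = ENNReal.ofReal (h x / x ^ α) := by
    intro n i j x hx
    rcases le_total i j with hij | hij
    · exact htail n i j hij x hx
    · simpa only [hsymm n i j] using htail n j i hij x hx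
  have hrow n := iIndepFun_row (a n) (fun i j => funext (hsymm n i j)) (hindep n)
  refine tendsto_of_tendsto_of_tendsto_of_le_of_le' tendsto_const_nhds
    (tendsto_measure_exists_heavy_row hα hα2 a hmeas hrow htail_symm
      (fun x hx => div_pos (hpos x hx) (rpow_pos_of_pos hx α))
      (tendsto_doubling_ratio_div_rpow α (hslow 2 two_pos)) hb (by simpa using hbn 1 one_pos))
    (Eventually.of_forall fun _ => zero_le) (Eventually.of_forall fun n => measure_mono ?_)
  rintro ω ⟨i, j₀, -, hbig⟩
  exact ⟨i, j₀, hbig⟩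
end
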